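/- arXiv:2204.14212 — 3 statements merged into one kernel-verified Lean document; each statement's English description precedes it below -/
import Mathlib

section
/- Let G and H be digraphs such that min{χ_a(G), χ_a(H)} = χ_a(G) and χ_a(G) ≤ 2. Then χ_a(G × H) = χ_a(G), where G × H is the direct product. -/
/-- A directed cycle in the digraph with arc relation `Adj`: a list of at least two
distinct vertices with an arc between consecutive vertices and an arc from the last
vertex back to the first. -/
def IsDicycle {V : Type*} (Adj : V → V → Prop) (l : List V) : Prop :=
  2 ≤ l.length ∧ l.Nodup ∧ l.Chain' Adj ∧
    ∀ h : l ≠ [], Adj (l.getLast h) (l.head h)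

/-- A set of vertices is acyclic if the induced subdigraph contains no directed cycle. -/
def AcyclicSet {V : Type*} (Adj : V → V → Prop) (S : Set V) : Prop :=
  ¬ ∃ l : List V, (∀ v ∈ l, v ∈ S) ∧ IsDicycle Adj l

/-- A coloring is acyclic if every color class is an acyclic set. -/
def IsAcyclicColoring {V C : Type*} (Adj : V → V → Prop) (f : V → C) : Prop :=
  ∀ c : C, AcyclicSet Adj (f ⁻¹' {c})

/-- The dichromatic number: the least `k` admitting an acyclic `k`-coloring. -/
noncomputable def dichromaticNumber {V : Type*} (Adj : V → V → Prop) : ℕ :=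
  sInf {k : ℕ | ∃ f : V → Fin k, IsAcyclicColoring Adj f}

/-- Cartesian product of digraphs. -/
def cartAdj {V W : Type*} (GA : V → V → Prop) (HA : W → W → Prop) :
    V × W → V × W → Prop :=
  fun p q => (p.1 = q.1 ∧ HA p.2 q.2) ∨ (GA p.1 q.1 ∧ p.2 = q.2)

/-- Direct product of digraphs. -/
def directAdj {V W : Type*} (GA : V → V → Prop) (HA : W → W → Prop) :
    V × W → V × W → Prop :=
  fun p q => GA p.1 q.1 ∧ HA p.2 q.2

/-- Strong product of digraphs. -/
def strongAdj {V W : Type*} (GA : V → V → Prop) (HA : W → W → Prop) :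
    V × W → V × W → Prop :=
  fun p q => (p.1 = q.1 ∧ HA p.2 q.2) ∨ (GA p.1 q.1 ∧ p.2 = q.2) ∨
    (GA p.1 q.1 ∧ HA p.2 q.2)

/-- Lexicographic product of digraphs. -/
def lexAdj {V W : Type*} (GA : V → V → Prop) (HA : W → W → Prop) :
    V × W → V × W → Prop :=
  fun p q => GA p.1 q.1 ∨ (p.1 = q.1 ∧ HA p.2 q.2)

/-- The dicycle on `n` vertices: arcs `i → i + 1` on `ZMod n`. -/
def dicycleAdj (n : ℕ) : ZMod n → ZMod n → Prop := fun i j => j = i + 1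

/-- The complete digraph on `k` vertices. -/
def completeAdj (k : ℕ) : Fin k → Fin k → Prop := fun i j => i ≠ j

/-! A dicycle of `G × H` projects to a closed walk of `G` inside one colour class, and a closed
walk in a loopless digraph contains a dicycle; so every acyclic colouring of `G` is one of
`G × H`. Conversely, if `χ_a(G) = 2 ≤ χ_a(H)`, walking simultaneously around a dicycle of `G` of
length `a` and one of `H` of length `b` is a closed walk of length `ab` in `G × H`, which again
contains a dicycle. For `χ_a(G) ≤ 1` it only matters that `G × H` is nonempty. -/

namespace IsDicycle

variable {V : Type*} {Adj : V → V → Prop} {l : List V}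

theorem length_pos (hl : IsDicycle Adj l) : 0 < l.length := by
  have := hl.1
  omega

theorem ne_nil (hl : IsDicycle Adj l) : l ≠ [] := List.length_pos_iff.mp hl.length_pos

theorem exists_periodic (hl : IsDicycle Adj l) :
    ∃ P : ℕ → V, Function.Periodic P l.length ∧ (∀ i, Adj (P i) (P (i + 1))) ∧ ∀ i, P i ∈ l := by
  obtain ⟨hlen, -, hchain, hclose⟩ := hl
  have hpos : 0 < l.length := by omega
  refine ⟨fun i => l[i % l.length]'(Nat.mod_lt _ hpos), fun i => by simp, fun i => ?_,
    fun i => List.getElem_mem _⟩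
  have hmod : (i + 1) % l.length = (i % l.length + 1) % l.length := by
    rw [Nat.add_mod, Nat.mod_eq_of_lt (show 1 < l.length by omega)]
  rcases Nat.lt_or_ge (i % l.length + 1) l.length with hlt | hge
  · simp only [hmod, Nat.mod_eq_of_lt hlt]
    exact List.isChain_iff_getElem.mp hchain _ hlt
  · have hlast : i % l.length = l.length - 1 := by have := Nat.mod_lt i hpos; omega
    have hfirst : (i + 1) % l.length = 0 := by
      rw [hmod, hlast, Nat.sub_add_cancel hpos, Nat.mod_self]
    have := hclose (List.length_pos_iff.mp hpos)
    rw [List.getLast_eq_getElem, List.head_eq_getElem_zero] at this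
    simpa only [hlast, hfirst] using this

end IsDicycle

-- A closed walk of length `n` is encoded as an `n`-periodic sequence; the dicycle is
-- `P i, …, P (i + d - 1)` for the least positive return time `d` of `P`.
theorem exists_isDicycle_of_periodic {V : Type*} {Adj : V → V → Prop} (hirr : Irreflexive Adj)
    {P : ℕ → V} {n : ℕ} (hn : 0 < n) (hP : Function.Periodic P n)
    (hstep : ∀ i, Adj (P i) (P (i + 1))) :
    ∃ l : List V, (∀ v ∈ l, v ∈ Set.range P) ∧ IsDicycle Adj l := by
  classical
  have hex : ∃ d, 0 < d ∧ ∃ i, P (i + d) = P i := ⟨n, hn, 0, by simpa using hP 0⟩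
  obtain ⟨hd, i, hi⟩ := Nat.find_spec hex
  set d := Nat.find hex
  have hmin : ∀ e < d, ∀ j, 0 < e → P (j + e) ≠ P j :=
    fun e hed j he h => Nat.find_min hex hed ⟨he, j, h⟩
  have hd2 : 2 ≤ d := by
    by_contra h
    have hd1 : d = 1 := by omega
    rw [hd1] at hi
    exact hirr (P i) (hi ▸ hstep i)
  refine ⟨(List.range d).map (fun k => P (i + k)), ?_, ?_, ?_, ?_, ?_⟩
  · simp
  · simpa
  · refine List.Nodup.map_on (fun k hk k' hk' h => ?_) List.nodup_range
    simp only [List.mem_range] at hk hk'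
    by_contra hne
    rcases Nat.lt_or_gt_of_ne hne with hlt | hlt
    · exact hmin (k' - k) (by omega) (i + k) (by omega)
        (by rw [Nat.add_assoc, Nat.add_sub_cancel' hlt.le, h])
    · exact hmin (k - k') (by omega) (i + k') (by omega)
        (by rw [Nat.add_assoc, Nat.add_sub_cancel' hlt.le, h])
  · exact (List.isChain_map _).2 ((List.isChain_range _ _).2 fun m _ => hstep (i + m))
  · intro _
    simp only [List.getLast_map, List.getLast_range, List.head_map, List.head_range, Nat.add_zero]
    simpa only [show i + (d - 1) + 1 = i + d by omega, hi] using hstep (i + (d - 1))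

section Coloring

variable {V C D : Type*} {Adj : V → V → Prop}

theorem AcyclicSet.of_subsingleton {S : Set V} (hS : S.Subsingleton) : AcyclicSet Adj S := by
  rintro ⟨_ | ⟨v, _ | ⟨w, l⟩⟩, hlS, hlen, hnd, -⟩
  · simp at hlen
  · simp at hlen
  · exact (List.nodup_cons.mp hnd).1 (hS (hlS v (by simp)) (hlS w (by simp)) ▸ by simp)

theorem IsAcyclicColoring.comp_injective {f : V → C} (hf : IsAcyclicColoring Adj f) {g : C → D}
    (hg : Function.Injective g) : IsAcyclicColoring Adj (g ∘ f) := by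
  rintro d ⟨l, hlS, hl⟩
  refine hf (f (l.head hl.ne_nil)) ⟨l, fun v hv => hg ?_, hl⟩
  exact (hlS v hv).trans (hlS _ (List.head_mem hl.ne_nil)).symm

theorem dichromaticNumber_le {k : ℕ} {f : V → Fin k} (hf : IsAcyclicColoring Adj f) :
    dichromaticNumber Adj ≤ k :=
  Nat.sInf_le ⟨f, hf⟩

variable [Fintype V]

theorem exists_isAcyclicColoring_dichromaticNumber :
    ∃ f : V → Fin (dichromaticNumber Adj), IsAcyclicColoring Adj f :=
  Nat.sInf_mem (s := {k | ∃ f : V → Fin k, IsAcyclicColoring Adj f})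
    ⟨_, Fintype.equivFin V, fun _ => .of_subsingleton
      fun _ hu _ hv => (Fintype.equivFin V).injective (hu.trans hv.symm)⟩

theorem dichromaticNumber_le_iff {k : ℕ} :
    dichromaticNumber Adj ≤ k ↔ ∃ f : V → Fin k, IsAcyclicColoring Adj f := by
  refine ⟨fun h => ?_, fun ⟨f, hf⟩ => dichromaticNumber_le hf⟩
  obtain ⟨f, hf⟩ := exists_isAcyclicColoring_dichromaticNumber (Adj := Adj)
  exact ⟨Fin.castLE h ∘ f, hf.comp_injective (Fin.castLE_injective h)⟩

theorem dichromaticNumber_pos_iff : 0 < dichromaticNumber Adj ↔ Nonempty V := by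
  rw [Nat.pos_iff_ne_zero, ne_eq, ← Nat.le_zero, dichromaticNumber_le_iff, ← not_isEmpty_iff]
  refine not_congr ⟨fun ⟨f, _⟩ => ⟨fun v => (f v).elim0⟩, fun _ => ?_⟩
  exact ⟨isEmptyElim, fun c => c.elim0⟩

theorem one_lt_dichromaticNumber_iff :
    1 < dichromaticNumber Adj ↔ ∃ l : List V, IsDicycle Adj l := by
  rw [← not_le, dichromaticNumber_le_iff, not_iff_comm, not_exists]
  constructor
  · exact fun h => ⟨fun _ => 0, fun _ ⟨l, _, hl⟩ => h l hl⟩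
  · rintro ⟨f, hf⟩ l hl
    exact hf (f (l.head hl.ne_nil)) ⟨l, fun v _ => Subsingleton.elim _ _, hl⟩

end Coloring

section DirectProduct

variable {V W C : Type*} {GA : V → V → Prop} {HA : W → W → Prop}

theorem IsAcyclicColoring.comp_fst (hirr : Irreflexive GA) {f : V → C}
    (hf : IsAcyclicColoring GA f) : IsAcyclicColoring (directAdj GA HA) (f ∘ Prod.fst) := by
  rintro c ⟨L, hLc, hL⟩
  obtain ⟨P, hper, hstep, hmem⟩ := hL.exists_periodic
  obtain ⟨l, hl, hcyc⟩ := exists_isDicycle_of_periodic hirr (P := Prod.fst ∘ P) hL.length_pos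
    (fun i => congrArg Prod.fst (hper i)) (fun i => (hstep i).1)
  refine hf c ⟨l, fun v hv => ?_, hcyc⟩
  obtain ⟨i, rfl⟩ := hl v hv
  exact hLc _ (hmem i)

theorem dichromaticNumber_directAdj_le [Fintype V] (hirr : Irreflexive GA) :
    dichromaticNumber (directAdj GA HA) ≤ dichromaticNumber GA :=
  have ⟨_, hf⟩ := exists_isAcyclicColoring_dichromaticNumber (Adj := GA)
  dichromaticNumber_le (hf.comp_fst hirr)

theorem IsDicycle.exists_isDicycle_directAdj (hirr : Irreflexive GA) {lG : List V} {lH : List W}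
    (hG : IsDicycle GA lG) (hH : IsDicycle HA lH) :
    ∃ L : List (V × W), IsDicycle (directAdj GA HA) L := by
  obtain ⟨P, hPper, hPstep, -⟩ := hG.exists_periodic
  obtain ⟨Q, hQper, hQstep, -⟩ := hH.exists_periodic
  have hper : Function.Periodic (fun i => (P i, Q i)) (lG.length * lH.length) := fun i =>
    Prod.ext (by simpa [mul_comm] using hPper.nat_mul lH.length i)
      (by simpa using hQper.nat_mul lG.length i)
  obtain ⟨L, -, hL⟩ := exists_isDicycle_of_periodic
    (fun p (h : directAdj GA HA p p) => hirr p.1 h.1) (mul_pos hG.length_pos hH.length_pos) hper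
    (fun i => ⟨hPstep i, hQstep i⟩)
  exact ⟨L, hL⟩

end DirectProduct

theorem stmt4_general {V W : Type*} [Fintype V] [Fintype W]
    (GA : V → V → Prop) (HA : W → W → Prop)
    (hG : Irreflexive GA)
    (hmin : min (dichromaticNumber GA) (dichromaticNumber HA) = dichromaticNumber GA)
    (h2 : dichromaticNumber GA ≤ 2) :
    dichromaticNumber (directAdj GA HA) = dichromaticNumber GA := by
  have hGH : dichromaticNumber GA ≤ dichromaticNumber HA := min_eq_left_iff.mp hmin
  refine le_antisymm (dichromaticNumber_directAdj_le hG) ?_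
  interval_cases h : dichromaticNumber GA
  · exact Nat.zero_le _
  · have : Nonempty V := dichromaticNumber_pos_iff.mp (by omega : 0 < dichromaticNumber GA)
    have : Nonempty W := dichromaticNumber_pos_iff.mp (hGH : 0 < dichromaticNumber HA)
    exact dichromaticNumber_pos_iff.mpr inferInstance
  · obtain ⟨lG, hlG⟩ := one_lt_dichromaticNumber_iff.mp (by omega : 1 < dichromaticNumber GA)
    obtain ⟨lH, hlH⟩ := one_lt_dichromaticNumber_iff.mp (hGH : 1 < dichromaticNumber HA)
    exact one_lt_dichromaticNumber_iff.mpr (hlG.exists_isDicycle_directAdj hG hlH)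

theorem stmt4 {V W : Type*} [Fintype V] [Fintype W]
    (GA : V → V → Prop) (HA : W → W → Prop)
    (hG : Irreflexive GA) (hH : Irreflexive HA)
    (hmin : min (dichromaticNumber GA) (dichromaticNumber HA) = dichromaticNumber GA)
    (h2 : dichromaticNumber GA ≤ 2) :
    dichromaticNumber (directAdj GA HA) = dichromaticNumber GA :=
  stmt4_general GA HA hG hmin h2
end

section
/- Let ι be a nonempty finite index type and let n : ι → ℕ with n i ≥ 2 for every i. The direct product over ι of the dicycles C⃗_{n i} — namely the digraph on the product type Π i, ZMod (n i) with an arc from f to g iff for every i there is an arc from f i to g i in C⃗_{n i} — has dichromatic number exactly 2. -/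
/-!
Projecting onto one coordinate `i₀` is a homomorphism to `C⃗_{n i₀}`. A closed walk in a dicycle
winds around it and so visits every vertex; hence the vertices with `f i₀ ≠ 0` induce an acyclic
set, while those with `f i₀ = 0` span no arc at all. This gives an acyclic 2-colouring. Conversely
the product is a finite digraph in which `f ↦ f + 1` follows arcs, so the orbit of `0` under it is
a directed cycle and one colour does not suffice.
-/

open Function

lemma List.IsChain.getElem_eq_add_of_succ {M : Type*} [AddMonoidWithOne M] {l : List M}
    (hl : l.IsChain fun a b => b = a + 1) {k : ℕ} (hk : k < l.length) :
    l[k] = l[0] + k := by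
  induction k with
  | zero => simp
  | succ k ih =>
    rw [List.isChain_iff_getElem.mp hl k hk, ih (by omega), Nat.cast_succ, add_assoc]

lemma ZMod.mem_of_isChain_dicycleAdj {n : ℕ} [NeZero n] {l : List (ZMod n)} (hne : l ≠ [])
    (hchain : l.IsChain (dicycleAdj n)) (hclose : dicycleAdj n (l.getLast hne) (l.head hne))
    (c : ZMod n) : c ∈ l := by
  have hpos : 0 < l.length := List.length_pos_iff.mpr hne
  have hwind : (l.length : ZMod n) = 0 := by
    have h : l[0] = l[0] + ((l.length - 1 : ℕ) : ZMod n) + 1 := by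
      rw [← hchain.getElem_eq_add_of_succ (Nat.sub_one_lt_of_lt hpos), ← List.head_eq_getElem hne,
        ← List.getLast_eq_getElem hne]
      exact hclose
    rwa [add_assoc, ← Nat.cast_add_one, Nat.sub_add_cancel hpos, left_eq_add] at h
  have hk : (c - l[0]).val < l.length :=
    (ZMod.val_lt _).trans_le (Nat.le_of_dvd hpos ((ZMod.natCast_eq_zero_iff _ _).mp hwind))
  have hc : l[(c - l[0]).val] = c := by
    rw [hchain.getElem_eq_add_of_succ hk, ZMod.natCast_val, ZMod.cast_id', id, add_sub_cancel]
  exact hc ▸ List.getElem_mem hk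

section Digraph

variable {V : Type*} {Adj : V → V → Prop}

lemma IsDicycle.ne_nil_s6 {l : List V} (hl : IsDicycle Adj l) : l ≠ [] :=
  List.ne_nil_of_length_pos (by have := hl.1; omega)

lemma AcyclicSet.mono {S T : Set V} (hT : AcyclicSet Adj T) (hST : S ⊆ T) : AcyclicSet Adj S :=
  fun ⟨l, hl, hcyc⟩ => hT ⟨l, fun v hv => hST (hl v hv), hcyc⟩

lemma acyclicSet_of_forall_not_adj {S : Set V} (hS : ∀ x ∈ S, ∀ y ∈ S, ¬ Adj x y) :
    AcyclicSet Adj S := by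
  rintro ⟨l, hl, hcyc⟩
  have hne := hcyc.ne_nil_s6
  exact hS _ (hl _ (List.getLast_mem hne)) _ (hl _ (List.head_mem hne)) (hcyc.2.2.2 hne)

lemma dichromaticNumber_eq_two {f : V → Fin 2} (hf : IsAcyclicColoring Adj f) {l : List V}
    (hl : IsDicycle Adj l) : dichromaticNumber Adj = 2 := by
  refine le_antisymm (Nat.sInf_le ⟨f, hf⟩) (le_csInf ⟨2, f, hf⟩ ?_)
  rintro k ⟨g, hg⟩
  by_contra! hk
  have : Subsingleton (Fin k) := Fin.subsingleton_iff_le_one.mpr (by omega)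
  exact hg (g (l.head hl.ne_nil_s6)) ⟨l, fun v _ => Subsingleton.elim _ _, hl⟩

lemma isDicycle_iterate_minimalPeriod {s : V → V} (hs : ∀ x, Adj x (s x)) {x : V}
    (hx : x ∈ periodicPts s) (hsx : s x ≠ x) :
    IsDicycle Adj (List.iterate s x (minimalPeriod s x)) := by
  have hpos := minimalPeriod_pos_of_mem_periodicPts hx
  have hne_one : minimalPeriod s x ≠ 1 := fun h => hsx (minimalPeriod_eq_one_iff_isFixedPt.mp h)
  refine ⟨by simp; omega, ?_, ?_, ?_⟩
  · rw [← List.range_map_iterate]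
    exact List.nodup_range.map_on fun a ha b hb hab =>
      iterate_injOn_Iio_minimalPeriod (by simpa using ha) (by simpa using hb) hab
  · rw [← List.range_map_iterate]
    refine List.isChain_map_of_isChain _ (fun a b (hab : b = a + 1) => ?_)
      ((List.isChain_range _ _).mpr fun m _ => rfl)
    rw [hab, iterate_succ_apply']
    exact hs _
  · intro hne
    have hlast : s (s^[minimalPeriod s x - 1] x) = x := by
      rw [← iterate_succ_apply' s, Nat.succ_eq_add_one, Nat.sub_add_cancel hpos,
        iterate_minimalPeriod]
    rw [List.getLast_eq_getElem, List.head_eq_getElem, List.getElem_iterate, List.getElem_iterate]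
    simpa [hlast] using hs (s^[minimalPeriod s x - 1] x)

lemma exists_isAcyclicColoring_fin_two_of_hom {n : ℕ} (hn : 2 ≤ n) (φ : V → ZMod n)
    (hφ : ∀ x y, Adj x y → dicycleAdj n (φ x) (φ y)) :
    ∃ f : V → Fin 2, IsAcyclicColoring Adj f := by
  have : Fact (1 < n) := ⟨hn⟩
  have hzero : AcyclicSet Adj {x | φ x = 0} :=
    acyclicSet_of_forall_not_adj fun x (hx : φ x = 0) y (hy : φ y = 0) hxy => by
      have h := hφ x y hxy
      rw [dicycleAdj, hx, hy, zero_add] at h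
      exact zero_ne_one h
  have hnonzero : AcyclicSet Adj {x | φ x ≠ 0} := by
    rintro ⟨l, hl, hcyc⟩
    have hne := hcyc.ne_nil_s6
    have hmem := ZMod.mem_of_isChain_dicycleAdj (l := l.map φ) (by simpa using hne)
      (List.isChain_map_of_isChain φ hφ hcyc.2.2.1)
      (by simpa [List.getLast_map, List.head_map] using hφ _ _ (hcyc.2.2.2 hne)) 0
    obtain ⟨x, hx, hx0⟩ := List.mem_map.mp hmem
    exact hl x hx hx0
  refine ⟨fun x => if φ x = 0 then 0 else 1, fun c => ?_⟩
  fin_cases c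
  · exact hzero.mono fun x hx => by simpa using hx
  · exact hnonzero.mono fun x hx => by simpa using hx

end Digraph

theorem stmt6 {ι : Type*} [Fintype ι] [Nonempty ι]
    (n : ι → ℕ) (hn : ∀ i, 2 ≤ n i) :
    dichromaticNumber
      (fun f g : (∀ i, ZMod (n i)) => ∀ i, dicycleAdj (n i) (f i) (g i)) = 2 := by
  have (i : ι) : Fact (1 < n i) := ⟨hn i⟩
  obtain ⟨i₀⟩ := ‹Nonempty ι›
  obtain ⟨f, hf⟩ := exists_isAcyclicColoring_fin_two_of_hom (hn i₀)
    (fun x : ∀ i, ZMod (n i) => x i₀) fun x y (hxy : ∀ i, dicycleAdj (n i) (x i) (y i)) => hxy i₀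
  exact dichromaticNumber_eq_two hf (isDicycle_iterate_minimalPeriod (s := (· + 1))
    (fun x i => rfl) ((add_left_injective 1).mem_periodicPts 0)
    fun h => (one_ne_zero : (1 : ZMod (n i₀)) ≠ 0) (by simpa using congrFun h i₀))
end

section
/- Let G and H be digraphs with V(H) nonempty, and suppose H is a DAG (H contains no directed cycle). Then χ_a(G □ H) = χ_a(G), χ_a(G ⊠ H) = χ_a(G), χ_a(G[H]) = χ_a(G), and the direct product G × H contains no directed cycle, i.e., χ_a(G × H) ≤ 1. -/
/-! In the lexicographic product `G[H]` every arc either advances in `G` or stays inside a fibre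
`{u} × H`. So a closed walk inside a colour class of `(u, x) ↦ f u` either projects to a closed
walk inside a colour class of `f`, or stays in one fibre and is a closed walk of `H`; since closed
walks of loopless digraphs contain dicycles, acyclic colourings of `G` lift to `G[H]` and hence to
its spanning subdigraphs `G □ H` and `G ⊠ H`, while each of the three products contains the copy
`G × {x}` of `G`. A closed walk in the direct product `G × H` projects to a closed walk of `H`. -/

open Relation Set Function

section

variable {V W : Type*}

def inducedRel (S : Set V) (A : V → V → Prop) : V → V → Prop :=
  fun a b => a ∈ S ∧ b ∈ S ∧ A a b

instance {S : Set V} {A : V → V → Prop} [Std.Irrefl A] : Std.Irrefl (inducedRel S A) :=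
  ⟨fun a h => irrefl a h.2.2⟩

theorem List.exists_eq_append_cons_append_cons_of_not_nodup {l : List V} (h : ¬ l.Nodup) :
    ∃ (x : V) (l₁ l₂ l₃ : List V), l = l₁ ++ x :: l₂ ++ x :: l₃ := by
  induction l with
  | nil => simp at h
  | cons a t ih =>
    by_cases ha : a ∈ t
    · obtain ⟨s, t', rfl⟩ := List.append_of_mem ha
      exact ⟨a, [], s, t', by simp⟩
    · obtain ⟨x, l₁, l₂, l₃, rfl⟩ := ih fun ht => h (List.nodup_cons.mpr ⟨ha, ht⟩)
      exact ⟨x, a :: l₁, l₂, l₃, rfl⟩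

section Dicycle

variable {A B : V → V → Prop} {l : List V}

theorem IsDicycle.mono (hAB : A ≤ B) (h : IsDicycle A l) : IsDicycle B l :=
  ⟨h.1, h.2.1, List.IsChain.imp hAB h.2.2.1, fun hne => hAB _ _ (h.2.2.2 hne)⟩

theorem IsDicycle.map {B : W → W → Prop} {e : V → W} (he : Injective e)
    (hom : ∀ u v, A u v → B (e u) (e v)) (h : IsDicycle A l) : IsDicycle B (l.map e) := by
  obtain ⟨hlen, hnd, hchain, hclose⟩ := h
  refine ⟨by simpa using hlen, hnd.map he, List.isChain_map_of_isChain e hom hchain, ?_⟩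
  intro hne
  simpa using hom _ _ (hclose (by simpa using hne))

theorem IsDicycle.exists_rel_of_mem (h : IsDicycle A l) {v : V} (hv : v ∈ l) : ∃ w, A v w := by
  obtain ⟨i, hi, rfl⟩ := List.getElem_of_mem hv
  by_cases hlast : i + 1 < l.length
  · exact ⟨_, List.isChain_iff_getElem.mp h.2.2.1 i hlast⟩
  · have hne : l ≠ [] := List.ne_nil_of_length_pos (by omega)
    refine ⟨l.head hne, ?_⟩
    convert h.2.2.2 hne
    rw [List.getLast_eq_getElem]
    congr 1
    omega

theorem isDicycle_inducedRel_iff {S : Set V} :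
    IsDicycle (inducedRel S A) l ↔ IsDicycle A l ∧ ∀ v ∈ l, v ∈ S := by
  constructor
  · intro h
    refine ⟨h.mono fun _ _ hab => hab.2.2, fun v hv => ?_⟩
    obtain ⟨w, hvw⟩ := h.exists_rel_of_mem hv
    exact hvw.1
  · rintro ⟨⟨hlen, hnd, hchain, hclose⟩, hS⟩
    refine ⟨hlen, hnd,
      List.IsChain.imp_of_mem_imp (fun a b ha hb hab => ⟨hS a ha, hS b hb, hab⟩) hchain,
      fun hne => ⟨hS _ (List.getLast_mem hne), hS _ (List.head_mem hne), hclose hne⟩⟩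

theorem acyclicSet_iff_inducedRel {S : Set V} :
    AcyclicSet A S ↔ AcyclicSet (inducedRel S A) univ := by
  simp [AcyclicSet, isDicycle_inducedRel_iff, and_comm]

end Dicycle

section ClosedWalk

variable {A : V → V → Prop} [Std.Irrefl A]

theorem exists_isDicycle_of_isChain :
    ∀ (l : List V) (hne : l ≠ []), l.IsChain A → A (l.getLast hne) (l.head hne) →
      ∃ c, IsDicycle A c := by
  intro l
  induction hlen : l.length using Nat.strong_induction_on generalizing l with
  | _ n ih =>
  intro hne hchain hclose
  by_cases hnd : l.Nodup
  · obtain ⟨a, rfl⟩ | hlen2 : (∃ a, l = [a]) ∨ 2 ≤ l.length := by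
      match l, hne with
      | [a], _ => exact .inl ⟨a, rfl⟩
      | _ :: _ :: _, _ => exact .inr (by simp)
    · exact (irrefl a hclose).elim
    · exact ⟨l, hlen2, hnd, hchain, fun _ => hclose⟩
  · -- a repeated vertex `x` cuts out the shorter closed walk `x :: l₂`
    obtain ⟨x, l₁, l₂, l₃, rfl⟩ := List.exists_eq_append_cons_append_cons_of_not_nodup hnd
    refine ih (l₂.length + 1) (by simp at hlen; omega) (x :: l₂) rfl (List.cons_ne_nil _ _)
      (hchain.infix ⟨l₁, x :: l₃, by simp⟩) ?_
    have hjoin :=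
      List.IsChain.rel_getLast_head_of_append (l₁ := l₁ ++ x :: l₂) (l₂ := x :: l₃)
        (by simpa using hchain) (by simp) (List.cons_ne_nil _ _)
    simpa [List.getLast_append_of_ne_nil] using hjoin

theorem acyclicSet_univ_iff :
    AcyclicSet A univ ↔ ∀ a, ¬ TransGen A a a := by
  constructor
  · intro hacyc a hloop
    obtain ⟨b, hab, hba⟩ := TransGen.head'_iff.mp hloop
    obtain ⟨l, hchain, hlast⟩ := List.exists_isChain_cons_of_relationReflTransGen hba
    obtain ⟨c, hc⟩ := exists_isDicycle_of_isChain (b :: l) (List.cons_ne_nil _ _) hchain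
      (by rw [hlast]; exact hab)
    exact hacyc ⟨c, fun _ _ => mem_univ _, hc⟩
  · rintro hnoloop ⟨_ | ⟨a, t⟩, -, hlen, -, hchain, hclose⟩
    · simp at hlen
    · have hpath := List.relationReflTransGen_of_exists_isChain_cons t hchain rfl
      exact hnoloop a (TransGen.tail' hpath (hclose (List.cons_ne_nil _ _)))

end ClosedWalk

section Monotonicity

variable {A B : V → V → Prop} {S T : Set V}

theorem AcyclicSet.of_le (hAB : A ≤ B) (h : AcyclicSet B S) : AcyclicSet A S :=
  fun ⟨l, hS, hl⟩ => h ⟨l, hS, hl.mono hAB⟩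

theorem AcyclicSet.subset (hST : S ⊆ T) (h : AcyclicSet A T) : AcyclicSet A S :=
  fun ⟨l, hS, hl⟩ => h ⟨l, fun v hv => hST (hS v hv), hl⟩

theorem AcyclicSet.preimage {B : W → W → Prop} {T : Set W} {e : V → W} (he : Injective e)
    (hom : ∀ u v, A u v → B (e u) (e v)) (h : AcyclicSet B T) : AcyclicSet A (e ⁻¹' T) :=
  fun ⟨l, hS, hl⟩ => h ⟨l.map e, by simpa using hS, hl.map he hom⟩

theorem IsAcyclicColoring.of_le {C : Type*} {f : V → C} (hAB : A ≤ B)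
    (hf : IsAcyclicColoring B f) : IsAcyclicColoring A f :=
  fun c => (hf c).of_le hAB

theorem IsAcyclicColoring.comp {B : W → W → Prop} {C : Type*} {g : W → C} {e : V → W}
    (he : Injective e) (hom : ∀ u v, A u v → B (e u) (e v)) (hg : IsAcyclicColoring B g) :
    IsAcyclicColoring A (g ∘ e) :=
  fun c => (hg c).preimage (T := g ⁻¹' {c}) he hom

end Monotonicity

section Products

variable {G : V → V → Prop} {H : W → W → Prop}

instance [Std.Irrefl G] [Std.Irrefl H] : Std.Irrefl (lexAdj G H) :=
  ⟨fun p h => h.elim (irrefl p.1) (fun h' => irrefl p.2 h'.2)⟩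

theorem transGen_lexAdj {p q : V × W} (h : TransGen (lexAdj G H) p q) :
    TransGen G p.1 q.1 ∨ (p.1 = q.1 ∧ TransGen H p.2 q.2) := by
  induction h with
  | single h => exact h.imp .single fun h' => ⟨h'.1, .single h'.2⟩
  | tail _ hbq ih =>
    rcases ih with hG | ⟨he, hH⟩
    · rcases hbq with hbq | ⟨he', -⟩
      · exact .inl (hG.tail hbq)
      · exact .inl (he' ▸ hG)
    · rcases hbq with hbq | ⟨he', hbq⟩
      · exact .inl (he ▸ .single hbq)
      · exact .inr ⟨he.trans he', hH.tail hbq⟩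

theorem acyclicSet_univ_lexAdj [Std.Irrefl G] [Std.Irrefl H] (hG : AcyclicSet G univ)
    (hH : AcyclicSet H univ) : AcyclicSet (lexAdj G H) univ := by
  rw [acyclicSet_univ_iff] at hG hH ⊢
  intro p hp
  rcases transGen_lexAdj hp with hp | ⟨-, hp⟩
  exacts [hG p.1 hp, hH p.2 hp]

theorem inducedRel_prod_univ_lexAdj_le {S : Set V} :
    inducedRel (S ×ˢ univ) (lexAdj G H) ≤ lexAdj (inducedRel S G) H := by
  rintro p q ⟨hp, hq, hpq | hpq⟩
  exacts [.inl ⟨hp.1, hq.1, hpq⟩, .inr hpq]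

theorem AcyclicSet.lexAdj_prod_univ [Std.Irrefl G] [Std.Irrefl H] {S : Set V}
    (hG : AcyclicSet G S) (hH : AcyclicSet H univ) : AcyclicSet (lexAdj G H) (S ×ˢ univ) := by
  rw [acyclicSet_iff_inducedRel] at hG ⊢
  exact (acyclicSet_univ_lexAdj hG hH).of_le inducedRel_prod_univ_lexAdj_le

theorem IsAcyclicColoring.lexAdj [Std.Irrefl G] [Std.Irrefl H] {C : Type*} {f : V → C}
    (hf : IsAcyclicColoring G f) (hH : AcyclicSet H univ) :
    IsAcyclicColoring (lexAdj G H) (f ∘ Prod.fst) := by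
  intro c
  have hclass : (f ∘ Prod.fst) ⁻¹' {c} = (f ⁻¹' {c}) ×ˢ (univ : Set W) := by ext; simp
  rw [hclass]
  exact (hf c).lexAdj_prod_univ hH

theorem transGen_directAdj {p q : V × W} (h : TransGen (directAdj G H) p q) :
    TransGen H p.2 q.2 := by
  induction h with
  | single h => exact .single h.2
  | tail _ hbq ih => exact ih.tail hbq.2

theorem acyclicSet_univ_directAdj [Std.Irrefl H] (hH : AcyclicSet H univ) :
    AcyclicSet (directAdj G H) univ := by
  have : Std.Irrefl (directAdj G H) := ⟨fun p h => irrefl p.2 h.2⟩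
  rw [acyclicSet_univ_iff] at hH ⊢
  exact fun p hp => hH p.2 (transGen_directAdj hp)

theorem cartAdj_le_lexAdj : cartAdj G H ≤ lexAdj G H := by
  rintro p q (hpq | ⟨hpq, -⟩)
  exacts [.inr hpq, .inl hpq]

theorem strongAdj_le_lexAdj : strongAdj G H ≤ lexAdj G H := by
  rintro p q (hpq | ⟨hpq, -⟩ | ⟨hpq, -⟩)
  exacts [.inr hpq, .inl hpq, .inl hpq]

end Products

section DichromaticNumber

variable {G : V → V → Prop} {H : W → W → Prop}

theorem dichromaticNumber_eq_of_le_lexAdj [Nonempty W] [Std.Irrefl G] [Std.Irrefl H]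
    (hH : AcyclicSet H univ) {P : V × W → V × W → Prop}
    (hGP : ∀ x u v, G u v → P (u, x) (v, x)) (hP : P ≤ lexAdj G H) :
    dichromaticNumber P = dichromaticNumber G := by
  unfold dichromaticNumber
  congr 1
  ext k
  constructor
  · rintro ⟨F, hF⟩
    let x : W := Classical.arbitrary W
    exact ⟨F ∘ (·, x), hF.comp (fun u v h => congrArg Prod.fst h) (fun u v => hGP x u v)⟩
  · rintro ⟨f, hf⟩
    exact ⟨f ∘ Prod.fst, (hf.lexAdj hH).of_le hP⟩

theorem dichromaticNumber_le_one {A : V → V → Prop} (h : AcyclicSet A univ) :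
    dichromaticNumber A ≤ 1 :=
  Nat.sInf_le ⟨fun _ => 0, fun _ => h.subset (subset_univ _)⟩

end DichromaticNumber

end

theorem stmt16_general {V W : Type*} [Nonempty W]
    (GA : V → V → Prop) (HA : W → W → Prop)
    (hG : Irreflexive GA) (hH : Irreflexive HA)
    (hDAG : AcyclicSet HA Set.univ) :
    dichromaticNumber (cartAdj GA HA) = dichromaticNumber GA ∧
    dichromaticNumber (strongAdj GA HA) = dichromaticNumber GA ∧
    dichromaticNumber (lexAdj GA HA) = dichromaticNumber GA ∧
    AcyclicSet (directAdj GA HA) Set.univ ∧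
    dichromaticNumber (directAdj GA HA) ≤ 1 := by
  have : Std.Irrefl GA := ⟨hG⟩
  have : Std.Irrefl HA := ⟨hH⟩
  have hdirect : AcyclicSet (directAdj GA HA) univ := acyclicSet_univ_directAdj hDAG
  refine ⟨dichromaticNumber_eq_of_le_lexAdj hDAG (fun _ _ _ h => .inr ⟨h, rfl⟩)
      cartAdj_le_lexAdj,
    dichromaticNumber_eq_of_le_lexAdj hDAG (fun _ _ _ h => .inr (.inl ⟨h, rfl⟩))
      strongAdj_le_lexAdj,
    dichromaticNumber_eq_of_le_lexAdj hDAG (fun _ _ _ h => .inl h) le_rfl,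
    hdirect, dichromaticNumber_le_one hdirect⟩

theorem stmt16 {V W : Type*} [Fintype V] [Fintype W] [Nonempty W]
    (GA : V → V → Prop) (HA : W → W → Prop)
    (hG : Irreflexive GA) (hH : Irreflexive HA)
    (hDAG : AcyclicSet HA Set.univ) :
    dichromaticNumber (cartAdj GA HA) = dichromaticNumber GA ∧
    dichromaticNumber (strongAdj GA HA) = dichromaticNumber GA ∧
    dichromaticNumber (lexAdj GA HA) = dichromaticNumber GA ∧
    AcyclicSet (directAdj GA HA) Set.univ ∧
    dichromaticNumber (directAdj GA HA) ≤ 1 :=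
  stmt16_general GA HA hG hH hDAG
end
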